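/- Every alternating sign matrix and every magog matrix is a square sign matrix, and for n = 3 the sets of 3×3 alternating sign matrices and 3×3 magog matrices each have cardinality 7 but are not equal as sets. -/

import Mathlib

open Finset

/-- Partial row sum: sum of entries `a i j'` over (0-indexed) columns `j' < j`,
i.e. the 1-indexed partial row sum through column `j`. -/
def rowPS {n : ℕ} (a : Matrix (Fin n) (Fin n) ℤ) (i : Fin n) (j : ℕ) : ℤ :=
  ∑ j' ∈ Finset.univ.filter (fun j' : Fin n => (j' : ℕ) < j), a i j'

/-- Partial column sum: sum of entries `a i' j` over (0-indexed) rows `i' < i`,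
i.e. the 1-indexed partial column sum through row `i`. -/
def colPS {n : ℕ} (a : Matrix (Fin n) (Fin n) ℤ) (i : ℕ) (j : Fin n) : ℤ :=
  ∑ i' ∈ Finset.univ.filter (fun i' : Fin n => (i' : ℕ) < i), a i' j

/-- An `n × n` square sign matrix. -/
def IsSquareSign (n : ℕ) (a : Matrix (Fin n) (Fin n) ℤ) : Prop :=
  (∀ i j, a i j = 0 ∨ a i j = 1 ∨ a i j = -1) ∧
  (∀ i, ∑ j, a i j = 1) ∧
  (∀ j, ∑ i, a i j = 1) ∧
  (∀ (i : ℕ) (j : Fin n), colPS a i j = 0 ∨ colPS a i j = 1) ∧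
  (∀ (i : Fin n) (j : ℕ), 0 ≤ rowPS a i j)

/-- A magog matrix: a square sign matrix satisfying the special inequalities.
Here `i j : ℕ` are 0-indexed, so `i + 2 < n` corresponds to the 1-indexed
range `1 ≤ i ≤ n - 2`; the 1-indexed row `i+1` is the `Fin n` index `i`, etc. -/
def IsMagog (n : ℕ) (a : Matrix (Fin n) (Fin n) ℤ) : Prop :=
  IsSquareSign n a ∧
  ∀ (i j : ℕ) (hi : i + 2 < n) (hj : j + 2 < n),
    0 ≤ rowPS a ⟨i + 1, by omega⟩ (j + 1) + colPS a (i + 2) ⟨j + 1, by omega⟩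
        - colPS a (i + 1) ⟨j, by omega⟩

/-- An alternating sign matrix: a square sign matrix whose partial row sums
also lie in `{0, 1}`. -/
def IsASM (n : ℕ) (a : Matrix (Fin n) (Fin n) ℤ) : Prop :=
  IsSquareSign n a ∧ ∀ (i : Fin n) (j : ℕ), rowPS a i j = 0 ∨ rowPS a i j = 1

/-!
Partial sums stop changing past the last index, so all three conditions only involve finitely
many sums and are decidable. Every row of an `n × n` square sign matrix is a sign row: entries
in `{0, 1, -1}`, total sum `1`, nonnegative partial sums. For `n = 3` there are five sign rows,
so both sets are filters of the `125` matrices built from them and are counted by evaluation.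
The magog matrix with rows `(0, 0, 1)`, `(1, 1, -1)`, `(0, 0, 1)` has the partial row sum `2`,
so it is not alternating.
-/

section PartialSums

variable {n : ℕ} (a : Matrix (Fin n) (Fin n) ℤ)

lemma rowPS_of_le (i : Fin n) {j : ℕ} (h : n ≤ j) : rowPS a i j = rowPS a i n := by
  unfold rowPS
  congr 1
  ext j'
  simp only [mem_filter, mem_univ, true_and]
  omega

lemma colPS_of_le {i : ℕ} (h : n ≤ i) (j : Fin n) : colPS a i j = colPS a n j := by
  unfold colPS
  congr 1
  ext i'
  simp only [mem_filter, mem_univ, true_and]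
  omega

lemma forall_rowPS_iff (P : ℤ → Prop) (i : Fin n) :
    (∀ j : ℕ, P (rowPS a i j)) ↔ ∀ j : Fin (n + 1), P (rowPS a i j) := by
  refine ⟨fun h j => h j, fun h j => ?_⟩
  rcases lt_or_ge j (n + 1) with hj | hj
  · exact h ⟨j, hj⟩
  · simpa [rowPS_of_le a i (by omega : n ≤ j)] using h (Fin.last n)

lemma forall_colPS_iff (P : ℤ → Prop) (j : Fin n) :
    (∀ i : ℕ, P (colPS a i j)) ↔ ∀ i : Fin (n + 1), P (colPS a i j) := by
  refine ⟨fun h i => h i, fun h i => ?_⟩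
  rcases lt_or_ge i (n + 1) with hi | hi
  · exact h ⟨i, hi⟩
  · simpa [colPS_of_le a (by omega : n ≤ i)] using h (Fin.last n)

end PartialSums

lemma isSquareSign_iff_fin {n : ℕ} (a : Matrix (Fin n) (Fin n) ℤ) :
    IsSquareSign n a ↔ (∀ i j, a i j = 0 ∨ a i j = 1 ∨ a i j = -1) ∧
      (∀ i, ∑ j, a i j = 1) ∧ (∀ j, ∑ i, a i j = 1) ∧
      (∀ (i : Fin (n + 1)) (j : Fin n), colPS a i j = 0 ∨ colPS a i j = 1) ∧
      (∀ (i : Fin n) (j : Fin (n + 1)), 0 ≤ rowPS a i j) := by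
  refine and_congr_right' <| and_congr_right' <| and_congr_right' <| and_congr ?_ ?_
  · rw [forall_comm, forall_comm (β := Fin n)]
    exact forall_congr' fun j => forall_colPS_iff a (fun s => s = 0 ∨ s = 1) j
  · exact forall_congr' fun i => forall_rowPS_iff a (fun s => 0 ≤ s) i

instance (n : ℕ) : DecidablePred (IsSquareSign n) := fun (a : Fin n → Fin n → ℤ) =>
  decidable_of_iff _ (isSquareSign_iff_fin a).symm

instance (n : ℕ) : DecidablePred (IsASM n) := fun a =>
  decidable_of_iff (IsSquareSign n a ∧
    ∀ (i : Fin n) (j : Fin (n + 1)), rowPS a i j = 0 ∨ rowPS a i j = 1) <| by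
  simp only [IsASM, forall_rowPS_iff a (fun s => s = 0 ∨ s = 1)]

instance (n : ℕ) : DecidablePred (IsMagog n) := fun a =>
  decidable_of_iff (IsSquareSign n a ∧ ∀ i (hi : i < n - 2) j (hj : j < n - 2),
    0 ≤ rowPS a ⟨i + 1, by omega⟩ (j + 1) + colPS a (i + 2) ⟨j + 1, by omega⟩
        - colPS a (i + 1) ⟨j, by omega⟩) <|
  and_congr_right fun _ =>
    ⟨fun h i j _ _ => h i (by omega) j (by omega),
      fun h i _ j _ => h i j (by omega) (by omega)⟩

def signRows (n : ℕ) : Finset (Fin n → ℤ) :=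
  (Fintype.piFinset fun _ => ({0, 1, -1} : Finset ℤ)).filter fun r =>
    ∑ j, r j = 1 ∧
      ∀ j : Fin (n + 1), 0 ≤ ∑ j' ∈ univ.filter (fun j' : Fin n => (j' : ℕ) < j), r j'

lemma mem_signRows_of_isSquareSign {n : ℕ} {a : Matrix (Fin n) (Fin n) ℤ}
    (h : IsSquareSign n a) (i : Fin n) : a i ∈ signRows n := by
  simp only [signRows, mem_filter, Fintype.mem_piFinset, mem_insert, mem_singleton]
  exact ⟨h.1 i, h.2.1 i, fun j => h.2.2.2.2 i j⟩

def signRowMatrices (n : ℕ) : Finset (Matrix (Fin n) (Fin n) ℤ) :=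
  Fintype.piFinset fun _ => signRows n

lemma mem_signRowMatrices {n : ℕ} {a : Matrix (Fin n) (Fin n) ℤ} :
    a ∈ signRowMatrices n ↔ ∀ i, a i ∈ signRows n :=
  Fintype.mem_piFinset

lemma setOf_eq_filter_signRowMatrices {n : ℕ} {P : Matrix (Fin n) (Fin n) ℤ → Prop}
    [DecidablePred P] (hP : ∀ a, P a → IsSquareSign n a) :
    {a | P a} = ↑((signRowMatrices n).filter P) := by
  ext a
  rw [Set.mem_ofPred_eq, mem_coe, mem_filter, mem_signRowMatrices]
  exact ⟨fun h => ⟨mem_signRows_of_isSquareSign (hP a h), h⟩, And.right⟩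

lemma ncard_setOf_isASM_three : {a : Matrix (Fin 3) (Fin 3) ℤ | IsASM 3 a}.ncard = 7 := by
  rw [setOf_eq_filter_signRowMatrices fun _ h => h.1, Set.ncard_coe_finset]
  decide

lemma ncard_setOf_isMagog_three : {a : Matrix (Fin 3) (Fin 3) ℤ | IsMagog 3 a}.ncard = 7 := by
  rw [setOf_eq_filter_signRowMatrices fun _ h => h.1, Set.ncard_coe_finset]
  decide

lemma exists_isMagog_not_isASM_three :
    ∃ a : Matrix (Fin 3) (Fin 3) ℤ, IsMagog 3 a ∧ ¬ IsASM 3 a :=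
  ⟨!![0, 0, 1; 1, 1, -1; 0, 0, 1], by decide⟩

/-- Every alternating sign matrix and every magog matrix is a square sign matrix;
for `n = 3` there are exactly 7 of each, but the two sets are not equal. -/
theorem asm_magog_comparison :
    (∀ (n : ℕ) (a : Matrix (Fin n) (Fin n) ℤ), IsASM n a → IsSquareSign n a) ∧
    (∀ (n : ℕ) (a : Matrix (Fin n) (Fin n) ℤ), IsMagog n a → IsSquareSign n a) ∧
    {a : Matrix (Fin 3) (Fin 3) ℤ | IsASM 3 a}.ncard = 7 ∧
    {a : Matrix (Fin 3) (Fin 3) ℤ | IsMagog 3 a}.ncard = 7 ∧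
    {a : Matrix (Fin 3) (Fin 3) ℤ | IsASM 3 a} ≠
      {a : Matrix (Fin 3) (Fin 3) ℤ | IsMagog 3 a} := by
  refine ⟨fun _ _ h => h.1, fun _ _ h => h.1, ncard_setOf_isASM_three,
    ncard_setOf_isMagog_three, fun h => ?_⟩
  obtain ⟨a, ha_magog, ha_not_asm⟩ := exists_isMagog_not_isASM_three
  exact ha_not_asm (h.symm ▸ ha_magog : a ∈ {a | IsASM 3 a})
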